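/- arXiv:2304.02281 — 2 statements merged into one kernel-verified Lean document; each statement's English description precedes it below -/
import Mathlib

section
/- For the two-age-group SIR ODE system, if all initial values S_∘(0), I_∘(0), R_∘(0) are nonnegative, then S_∘(t), I_∘(t), R_∘(t) remain nonnegative for all t ≥ 0 (the nonnegative orthant is forward invariant). -/
open Real Filter Set Topology

private lemma const_of_hasDerivAt_zero' {f : ℝ → ℝ}
    (hf : ∀ t, HasDerivAt f 0 t) (s t : ℝ) : f s = f t :=
  is_const_of_deriv_eq_zero (fun x => (hf x).differentiableAt)
    (fun x => (hf x).deriv) s t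

/-- A solution of a scalar linear homogeneous ODE keeps its sign. -/
private lemma lin_nonneg (c x : ℝ → ℝ) (hc : Continuous c)
    (hx : ∀ t, HasDerivAt x (c t * x t) t) (h0 : 0 ≤ x 0) :
    ∀ t, 0 ≤ x t := by
  set u : ℝ → ℝ := fun t => ∫ s in (0:ℝ)..t, c s with hu
  have hud : ∀ t, HasDerivAt u (c t) t := fun t =>
    intervalIntegral.integral_hasDerivAt_right (hc.intervalIntegrable 0 t)
      (hc.stronglyMeasurableAtFilter _ _) hc.continuousAt
  have hh : ∀ t, HasDerivAt (fun t => x t * Real.exp (-(u t))) 0 t := by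
    intro t
    have h1 : HasDerivAt (fun t => Real.exp (-(u t))) (Real.exp (-(u t)) * (-(c t))) t :=
      ((hud t).neg).exp
    have h2 : HasDerivAt (fun t => x t * Real.exp (-(u t)))
        (c t * x t * Real.exp (-(u t)) + x t * (Real.exp (-(u t)) * -c t)) t := (hx t).mul h1
    convert h2 using 1
    ring
  have key : ∀ t, x t * Real.exp (-(u t)) = x 0 := by
    intro t
    have h3 := const_of_hasDerivAt_zero' hh t 0
    have hu0 : u 0 = 0 := by simp [hu]
    rw [h3, hu0]
    simp
  intro t
  have h4 : x t = x 0 * Real.exp (u t) := by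
    have h5 := key t
    have he : Real.exp (-(u t)) * Real.exp (u t) = 1 := by
      rw [← Real.exp_add]; simp
    calc x t = x t * (Real.exp (-(u t)) * Real.exp (u t)) := by rw [he]; ring
      _ = (x t * Real.exp (-(u t))) * Real.exp (u t) := by ring
      _ = x 0 * Real.exp (u t) := by rw [h5]
  rw [h4]
  exact mul_nonneg h0 (Real.exp_pos _).le

/-- Derivative at a right-endpoint minimum is nonpositive. -/
private lemma deriv_nonpos_of_min {f : ℝ → ℝ} {d t₁ : ℝ} (hf : HasDerivAt f d t₁)
    (h0 : 0 < t₁) (hmin : ∀ r ∈ Set.Ioo (0:ℝ) t₁, f t₁ ≤ f r) : d ≤ 0 := by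
  have hts : Tendsto (slope f t₁) (𝓝[<] t₁) (𝓝 d) :=
    (hasDerivAt_iff_tendsto_slope.mp hf).mono_left
      (nhdsWithin_mono _ (fun r hr => ne_of_lt hr))
  refine le_of_tendsto hts ?_
  filter_upwards [Ioo_mem_nhdsLT_of_mem (show t₁ ∈ Set.Ioc (0:ℝ) t₁ from ⟨h0, le_rfl⟩)]
    with r hr
  have h1 : f t₁ ≤ f r := hmin r hr
  have h2 : r - t₁ < 0 := by linarith [hr.2]
  rw [slope_def_field]
  exact div_nonpos_of_nonneg_of_nonpos (by linarith) h2.le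

/-- Nonnegativity is preserved for a cooperative 2×2 linear system. -/
private lemma coop2 (A B C D x y : ℝ → ℝ)
    (hA : Continuous A) (hB : Continuous B) (hC : Continuous C) (hD : Continuous D)
    (hBn : ∀ t, 0 ≤ B t) (hCn : ∀ t, 0 ≤ C t)
    (hx : ∀ t, HasDerivAt x (A t * x t + B t * y t) t)
    (hy : ∀ t, HasDerivAt y (C t * x t + D t * y t) t)
    (hx0 : 0 ≤ x 0) (hy0 : 0 ≤ y 0) :
    ∀ t, 0 ≤ t → 0 ≤ x t ∧ 0 ≤ y t := by
  intro T hT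
  obtain ⟨z, hz, hzmax⟩ := isCompact_Icc.exists_isMaxOn (Set.nonempty_Icc.mpr hT)
      ((hA.abs.add hB).add (hD.abs.add hC)).continuousOn
  set L : ℝ := |A z| + B z + (|D z| + C z) + 1 with hLdef
  have hLb : ∀ s ∈ Set.Icc (0:ℝ) T, |A s| + B s < L ∧ |D s| + C s < L := by
    intro s hs
    have h1 : |A s| + B s + (|D s| + C s) ≤ |A z| + B z + (|D z| + C z) := hzmax hs
    have h2 : 0 ≤ |A z| + B z := add_nonneg (abs_nonneg _) (hBn z)
    have h3 : 0 ≤ |D z| + C z := add_nonneg (abs_nonneg _) (hCn z)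
    have h4 : 0 ≤ |A s| + B s := add_nonneg (abs_nonneg _) (hBn s)
    have h5 : 0 ≤ |D s| + C s := add_nonneg (abs_nonneg _) (hCn s)
    constructor <;> linarith
  have main : ∀ ε : ℝ, 0 < ε → ∀ s ∈ Set.Icc (0:ℝ) T,
      0 < x s + ε * Real.exp (L * s) ∧ 0 < y s + ε * Real.exp (L * s) := by
    intro ε hε
    set xe : ℝ → ℝ := fun s => x s + ε * Real.exp (L * s) with hxedef
    set ye : ℝ → ℝ := fun s => y s + ε * Real.exp (L * s) with hyedef
    have hxc : Continuous x := continuous_iff_continuousAt.mpr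
      (fun t => (hx t).differentiableAt.continuousAt)
    have hyc : Continuous y := continuous_iff_continuousAt.mpr
      (fun t => (hy t).differentiableAt.continuousAt)
    have hec : Continuous (fun s : ℝ => ε * Real.exp (L * s)) := by continuity
    have hxec : Continuous xe := hxc.add hec
    have hyec : Continuous ye := hyc.add hec
    have hder : ∀ t, HasDerivAt (fun s => ε * Real.exp (L * s))
        (ε * (Real.exp (L * t) * L)) t := by
      intro t
      simpa using (((hasDerivAt_id t).const_mul L).exp).const_mul ε
    have hxde : ∀ t, HasDerivAt xe
        (A t * x t + B t * y t + ε * (Real.exp (L * t) * L)) t :=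
      fun t => (hx t).add (hder t)
    have hyde : ∀ t, HasDerivAt ye
        (C t * x t + D t * y t + ε * (Real.exp (L * t) * L)) t :=
      fun t => (hy t).add (hder t)
    intro s hs
    by_contra hcon
    set Z : Set ℝ := {r | r ∈ Set.Icc (0:ℝ) T ∧ (xe r ≤ 0 ∨ ye r ≤ 0)} with hZdef
    have hZne : Z.Nonempty := by
      refine ⟨s, hs, ?_⟩
      by_contra h
      push_neg at h
      exact hcon ⟨h.1, h.2⟩
    have hZclosed : IsClosed Z := by
      have : Z = Set.Icc (0:ℝ) T ∩ ({r | xe r ≤ 0} ∪ {r | ye r ≤ 0}) := by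
        ext r
        simp only [hZdef, Set.mem_setOf_eq, Set.mem_inter_iff, Set.mem_union]
      rw [this]
      exact isClosed_Icc.inter ((isClosed_le hxec continuous_const).union
        (isClosed_le hyec continuous_const))
    have hZbdd : BddBelow Z := ⟨0, fun r hr => hr.1.1⟩
    set t₁ := sInf Z with ht₁def
    have ht₁Z : t₁ ∈ Z := hZclosed.csInf_mem hZne hZbdd
    have ht₁Icc : t₁ ∈ Set.Icc (0:ℝ) T := ht₁Z.1
    have hpos : ∀ r, 0 ≤ r → r < t₁ → 0 < xe r ∧ 0 < ye r := by
      intro r h0r hrt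
      have hnotZ : r ∉ Z := fun hrZ => absurd (csInf_le hZbdd hrZ) (not_le.mpr hrt)
      have hrIcc : r ∈ Set.Icc (0:ℝ) T := ⟨h0r, hrt.le.trans ht₁Icc.2⟩
      constructor
      · by_contra h; exact hnotZ ⟨hrIcc, Or.inl (not_lt.mp h)⟩
      · by_contra h; exact hnotZ ⟨hrIcc, Or.inr (not_lt.mp h)⟩
    have ht₁pos : 0 < t₁ := by
      rcases lt_or_eq_of_le ht₁Icc.1 with h | h
      · exact h
      · exfalso
        have hx0' : 0 < xe 0 := by
          simp only [hxedef]
          have : Real.exp (L * 0) = 1 := by norm_num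
          rw [this]; nlinarith
        have hy0' : 0 < ye 0 := by
          simp only [hyedef]
          have : Real.exp (L * 0) = 1 := by norm_num
          rw [this]; nlinarith
        rcases ht₁Z.2 with h2 | h2 <;> rw [← h] at h2 <;> linarith
    have hxet₁ : 0 ≤ xe t₁ := by
      have hlim : Tendsto xe (𝓝[<] t₁) (𝓝 (xe t₁)) :=
        hxec.continuousAt.mono_left nhdsWithin_le_nhds
      refine ge_of_tendsto hlim ?_
      filter_upwards [Ioo_mem_nhdsLT_of_mem
        (show t₁ ∈ Set.Ioc (0:ℝ) t₁ from ⟨ht₁pos, le_rfl⟩)] with r hr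
      exact (hpos r hr.1.le hr.2).1.le
    have hyet₁ : 0 ≤ ye t₁ := by
      have hlim : Tendsto ye (𝓝[<] t₁) (𝓝 (ye t₁)) :=
        hyec.continuousAt.mono_left nhdsWithin_le_nhds
      refine ge_of_tendsto hlim ?_
      filter_upwards [Ioo_mem_nhdsLT_of_mem
        (show t₁ ∈ Set.Ioc (0:ℝ) t₁ from ⟨ht₁pos, le_rfl⟩)] with r hr
      exact (hpos r hr.1.le hr.2).2.le
    have hLt₁ := hLb t₁ ht₁Icc
    have hepos : (0:ℝ) < Real.exp (L * t₁) := Real.exp_pos _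
    rcases ht₁Z.2 with hcase | hcase
    · -- xe t₁ = 0
      have hxeq : xe t₁ = 0 := le_antisymm hcase hxet₁
      have hxval : x t₁ = -(ε * Real.exp (L * t₁)) := by
        have : x t₁ + ε * Real.exp (L * t₁) = 0 := hxeq
        linarith
      have hyval : -(ε * Real.exp (L * t₁)) ≤ y t₁ := by
        have : 0 ≤ y t₁ + ε * Real.exp (L * t₁) := hyet₁
        linarith
      have hdpos : 0 < A t₁ * x t₁ + B t₁ * y t₁ + ε * (Real.exp (L * t₁) * L) := by
        have h6 : A t₁ * x t₁ ≥ -(|A t₁| * (ε * Real.exp (L * t₁))) := by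
          rw [hxval]
          nlinarith [mul_le_mul_of_nonneg_right (le_abs_self (A t₁))
            (mul_pos hε hepos).le]
        have h7 : B t₁ * y t₁ ≥ -(B t₁ * (ε * Real.exp (L * t₁))) := by
          have := hBn t₁
          nlinarith
        nlinarith [h6, h7, mul_pos (sub_pos.mpr hLt₁.1) (mul_pos hε hepos)]
      have hdnonpos : A t₁ * x t₁ + B t₁ * y t₁ + ε * (Real.exp (L * t₁) * L) ≤ 0 := by
        refine deriv_nonpos_of_min (hxde t₁) ht₁pos ?_
        intro r hr
        rw [hxeq]
        exact (hpos r hr.1.le hr.2).1.le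
      linarith
    · -- ye t₁ = 0
      have hyeq : ye t₁ = 0 := le_antisymm hcase hyet₁
      have hyval : y t₁ = -(ε * Real.exp (L * t₁)) := by
        have : y t₁ + ε * Real.exp (L * t₁) = 0 := hyeq
        linarith
      have hxval : -(ε * Real.exp (L * t₁)) ≤ x t₁ := by
        have : 0 ≤ x t₁ + ε * Real.exp (L * t₁) := hxet₁
        linarith
      have hdpos : 0 < C t₁ * x t₁ + D t₁ * y t₁ + ε * (Real.exp (L * t₁) * L) := by
        have h6 : D t₁ * y t₁ ≥ -(|D t₁| * (ε * Real.exp (L * t₁))) := by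
          rw [hyval]
          nlinarith [mul_le_mul_of_nonneg_right (le_abs_self (D t₁))
            (mul_pos hε hepos).le]
        have h7 : C t₁ * x t₁ ≥ -(C t₁ * (ε * Real.exp (L * t₁))) := by
          have := hCn t₁
          nlinarith
        nlinarith [h6, h7, mul_pos (sub_pos.mpr hLt₁.2) (mul_pos hε hepos)]
      have hdnonpos : C t₁ * x t₁ + D t₁ * y t₁ + ε * (Real.exp (L * t₁) * L) ≤ 0 := by
        refine deriv_nonpos_of_min (hyde t₁) ht₁pos ?_
        intro r hr
        rw [hyeq]
        exact (hpos r hr.1.le hr.2).2.le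
      linarith
  have hTmem : T ∈ Set.Icc (0:ℝ) T := ⟨hT, le_rfl⟩
  constructor
  · by_contra h
    push_neg at h
    set ε : ℝ := -x T / (2 * Real.exp (L * T)) with hεdef
    have hε : 0 < ε := div_pos (by linarith) (by positivity)
    have h1 := (main ε hε T hTmem).1
    have h2 : ε * Real.exp (L * T) = -x T / 2 := by
      rw [hεdef]
      field_simp
    rw [h2] at h1
    linarith
  · by_contra h
    push_neg at h
    set ε : ℝ := -y T / (2 * Real.exp (L * T)) with hεdef
    have hε : 0 < ε := div_pos (by linarith) (by positivity)
    have h1 := (main ε hε T hTmem).2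
    have h2 : ε * Real.exp (L * T) = -y T / 2 := by
      rw [hεdef]
      field_simp
    rw [h2] at h1
    linarith

private lemma mono_nonneg (g x : ℝ → ℝ) (hx : ∀ t, HasDerivAt x (g t) t)
    (hg : ∀ t, 0 ≤ t → 0 ≤ g t) (h0 : 0 ≤ x 0) : ∀ t, 0 ≤ t → 0 ≤ x t := by
  intro t ht
  have hmono : MonotoneOn x (Set.Icc 0 t) := by
    apply monotoneOn_of_deriv_nonneg (convex_Icc 0 t)
      (Continuous.continuousOn (continuous_iff_continuousAt.mpr
        (fun s => (hx s).differentiableAt.continuousAt)))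
      (fun s _ => (hx s).differentiableAt.differentiableWithinAt)
    intro s hs
    rw [interior_Icc] at hs
    rw [(hx s).deriv]
    exact hg s hs.1.le
  have := hmono ⟨le_rfl, ht⟩ ⟨ht, le_rfl⟩ ht
  linarith

/-- For the two-age-group SIR ODE system, the nonnegative orthant is forward invariant:
nonnegative initial values stay nonnegative for all `t ≥ 0`. -/
theorem sir_nonneg_forward_invariant
    (raa rac rca rcc ra rc : ℝ)
    (hraa : 0 ≤ raa) (hrac : 0 ≤ rac) (hrca : 0 ≤ rca) (hrcc : 0 ≤ rcc)
    (hra : 0 ≤ ra) (hrc : 0 ≤ rc)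
    (Sa Sc Ia Ic Ra Rc : ℝ → ℝ)
    (hSa : ∀ t, HasDerivAt Sa (-(Sa t) * (raa * Ia t + rca * Ic t)) t)
    (hSc : ∀ t, HasDerivAt Sc (-(Sc t) * (rcc * Ic t + rac * Ia t)) t)
    (hIa : ∀ t, HasDerivAt Ia (Sa t * (raa * Ia t + rca * Ic t) - ra * Ia t) t)
    (hIc : ∀ t, HasDerivAt Ic (Sc t * (rcc * Ic t + rac * Ia t) - rc * Ic t) t)
    (hRa : ∀ t, HasDerivAt Ra (ra * Ia t) t)
    (hRc : ∀ t, HasDerivAt Rc (rc * Ic t) t)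
    (hSa0 : 0 ≤ Sa 0) (hSc0 : 0 ≤ Sc 0) (hIa0 : 0 ≤ Ia 0) (hIc0 : 0 ≤ Ic 0)
    (hRa0 : 0 ≤ Ra 0) (hRc0 : 0 ≤ Rc 0) :
    ∀ t : ℝ, 0 ≤ t →
      0 ≤ Sa t ∧ 0 ≤ Sc t ∧ 0 ≤ Ia t ∧ 0 ≤ Ic t ∧ 0 ≤ Ra t ∧ 0 ≤ Rc t := by
  have hIac : Continuous Ia := continuous_iff_continuousAt.mpr
    (fun t => (hIa t).differentiableAt.continuousAt)
  have hIcc : Continuous Ic := continuous_iff_continuousAt.mpr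
    (fun t => (hIc t).differentiableAt.continuousAt)
  have hSac : Continuous Sa := continuous_iff_continuousAt.mpr
    (fun t => (hSa t).differentiableAt.continuousAt)
  have hScc : Continuous Sc := continuous_iff_continuousAt.mpr
    (fun t => (hSc t).differentiableAt.continuousAt)
  -- Sa nonneg
  have hSaNN : ∀ t, 0 ≤ Sa t := by
    apply lin_nonneg (fun t => -(raa * Ia t + rca * Ic t)) Sa
    · exact ((continuous_const.mul hIac).add (continuous_const.mul hIcc)).neg
    · intro t
      have h := hSa t
      convert h using 1
      ring
    · exact hSa0
  have hScNN : ∀ t, 0 ≤ Sc t := by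
    apply lin_nonneg (fun t => -(rcc * Ic t + rac * Ia t)) Sc
    · exact ((continuous_const.mul hIcc).add (continuous_const.mul hIac)).neg
    · intro t
      have h := hSc t
      convert h using 1
      ring
    · exact hSc0
  -- Ia, Ic nonneg
  have hINN : ∀ t, 0 ≤ t → 0 ≤ Ia t ∧ 0 ≤ Ic t := by
    apply coop2 (fun t => raa * Sa t - ra) (fun t => rca * Sa t)
      (fun t => rac * Sc t) (fun t => rcc * Sc t - rc) Ia Ic
    · exact (continuous_const.mul hSac).sub continuous_const
    · exact continuous_const.mul hSac
    · exact continuous_const.mul hScc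
    · exact (continuous_const.mul hScc).sub continuous_const
    · exact fun t => mul_nonneg hrca (hSaNN t)
    · exact fun t => mul_nonneg hrac (hScNN t)
    · intro t
      have h := hIa t
      convert h using 1
      ring
    · intro t
      have h := hIc t
      convert h using 1
      ring
    · exact hIa0
    · exact hIc0
  have hRaNN : ∀ t, 0 ≤ t → 0 ≤ Ra t := by
    apply mono_nonneg (fun t => ra * Ia t) Ra hRa
    · exact fun t ht => mul_nonneg hra (hINN t ht).1
    · exact hRa0
  have hRcNN : ∀ t, 0 ≤ t → 0 ≤ Rc t := by
    apply mono_nonneg (fun t => rc * Ic t) Rc hRc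
    · exact fun t ht => mul_nonneg hrc (hINN t ht).2
    · exact hRc0
  intro t ht
  exact ⟨hSaNN t, hScNN t, (hINN t ht).1, (hINN t ht).2, hRaNN t ht, hRcNN t ht⟩
end

section
/- Let J: ℝⁿ → ℝ, and let Ĵ(u), Ĵ(u+αs) be approximate objective values with |Ĵ(v) - J(v)| ≤ e for v ∈ {u, u+αs}, where e ≤ ε c₁ α ‖s‖² and ‖s + ∇J(u)‖ ≤ ε‖s‖ with ε ∈ [0, 1/2), c₁ ∈ (0,1), α > 0. If the acceptance test Ĵ(u + αs) - Ĵ(u) ≤ -(1 + 3ε) c₁ α ‖s‖² is passed, then the exact Armijo condition J(u + αs) ≤ J(u) + α c₁ ∇J(u)ᵀ s holds. -/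
open scoped RealInnerProductSpace

/-!
An `ε`-accurate negative gradient is an `ε`-descent direction: `⟪∇J(u), s⟫ ≥ -(1 + ε) ‖s‖²`.
Sampling errors of size `e ≤ ε c₁ α ‖s‖²` at both points shift the observed decrease by at most
`2 ε c₁ α ‖s‖²`, so the test certifies a true decrease of `(1 + ε) c₁ α ‖s‖²`, which dominates
the Armijo decrease `-α c₁ ⟪∇J(u), s⟫`.
-/

lemma neg_one_add_mul_norm_sq_le_inner_of_norm_add_le {E : Type*} [NormedAddCommGroup E]
    [InnerProductSpace ℝ E] {s g : E} {ε : ℝ} (h : ‖s + g‖ ≤ ε * ‖s‖) :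
    -(1 + ε) * ‖s‖ ^ 2 ≤ ⟪g, s⟫ := by
  have hsg : -(‖s + g‖ * ‖s‖) ≤ ⟪s + g, s⟫ := neg_le_of_abs_le (abs_real_inner_le_norm _ _)
  have hsplit : ⟪s + g, s⟫ = ‖s‖ ^ 2 + ⟪g, s⟫ := by
    rw [inner_add_left, real_inner_self_eq_norm_sq]
  nlinarith [norm_nonneg s]

lemma sub_le_of_abs_sub_le_of_sub_le {a b a' b' e d : ℝ} (ha : |a' - a| ≤ e) (hb : |b' - b| ≤ e)
    (h : b' - a' ≤ d) : b - a ≤ d + 2 * e := by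
  linarith [le_abs_self (a' - a), neg_abs_le (b' - b)]

theorem armijo_of_acceptance_test_general
    (n : ℕ) (J : EuclideanSpace ℝ (Fin n) → ℝ)
    (u s gJ : EuclideanSpace ℝ (Fin n)) (α c₁ ε e Ju Jus : ℝ)
    (hα : 0 < α) (hc₁ : 0 < c₁)
    (herr : ‖s + gJ‖ ≤ ε * ‖s‖)
    (he : e ≤ ε * c₁ * α * ‖s‖^2)
    (hJu : |Ju - J u| ≤ e) (hJus : |Jus - J (u + α • s)| ≤ e)
    (htest : Jus - Ju ≤ -(1 + 3*ε) * c₁ * α * ‖s‖^2) :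
    J (u + α • s) ≤ J u + α * c₁ * ⟪gJ, s⟫ := by
  have hdescent := neg_one_add_mul_norm_sq_le_inner_of_norm_add_le herr
  have hdecrease := sub_le_of_abs_sub_le_of_sub_le hJu hJus htest
  have hscaled : α * c₁ * (-(1 + ε) * ‖s‖ ^ 2) ≤ α * c₁ * ⟪gJ, s⟫ :=
    mul_le_mul_of_nonneg_left hdescent (mul_pos hα hc₁).le
  linarith

/-- If sampled objective values `Ĵ` approximate `J` with absolute error at most
`e ≤ ε c₁ α ‖s‖²`, and the acceptance test
`Ĵ(u+αs) - Ĵ(u) ≤ -(1+3ε) c₁ α ‖s‖²` is passed, then the exact Armijo condition holds. -/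
theorem armijo_of_acceptance_test
    (n : ℕ) (J : EuclideanSpace ℝ (Fin n) → ℝ)
    (u s gJ : EuclideanSpace ℝ (Fin n)) (α c₁ ε e Ju Jus : ℝ)
    (hgrad : HasGradientAt J gJ u)
    (hα : 0 < α) (hc₁ : 0 < c₁) (hc₁' : c₁ < 1)
    (hε0 : 0 ≤ ε) (hε : ε < 1/2)
    (herr : ‖s + gJ‖ ≤ ε * ‖s‖)
    (he : e ≤ ε * c₁ * α * ‖s‖^2)
    (hJu : |Ju - J u| ≤ e) (hJus : |Jus - J (u + α • s)| ≤ e)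
    (htest : Jus - Ju ≤ -(1 + 3*ε) * c₁ * α * ‖s‖^2) :
    J (u + α • s) ≤ J u + α * c₁ * ⟪gJ, s⟫ :=
  armijo_of_acceptance_test_general n J u s gJ α c₁ ε e Ju Jus hα hc₁ herr he hJu hJus htest
end
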